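/- arXiv:1003.4874 — 2 statements merged into one kernel-verified Lean document; each statement's English description precedes it below -/
import Mathlib

section
/- Let B → A be a ring homomorphism of commutative rings, and let B̄ = ⊕_{i≥0} B̄_i and Ā = ⊕_{i≥0} Ā_i be nonnegatively graded rings with B̄_0 = B and Ā_0 = A, together with a graded ring homomorphism B̄ → Ā extending B → A. If Ā is flat as a B̄-module, then A is flat as a B-module. -/
/-!
Killing the positive-degree parts gives ring retractions `B̄ → B` and `Ā → A` of the
inclusions, compatible with `Φ` and `f`. Then `a ↦ 1 ⊗ a` exhibits `A` as a `B`-module retract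
of the base change `B ⊗_{B̄} Ā`, which is flat over `B` because `Ā` is flat over `B̄`.
-/

open TensorProduct

theorem DirectSum.decompose_map_apply {ι S T σ τ : Type*} [DecidableEq ι]
    [AddCommMonoid S] [AddCommMonoid T] [SetLike σ S] [AddSubmonoidClass σ S]
    [SetLike τ T] [AddSubmonoidClass τ T] (𝒜 : ι → σ) (ℬ : ι → τ)
    [DirectSum.Decomposition 𝒜] [DirectSum.Decomposition ℬ] (Φ : S →+ T)
    (hΦ : ∀ i, ∀ x ∈ 𝒜 i, Φ x ∈ ℬ i) (x : S) (i : ι) :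
    (DirectSum.decompose ℬ (Φ x) i : T) = Φ (DirectSum.decompose 𝒜 x i) := by
  induction x using DirectSum.Decomposition.inductionOn 𝒜 with
  | zero => simp
  | @homogeneous j m =>
    obtain ⟨m, hm⟩ := m
    by_cases hj : j = i
    · subst hj
      rw [decompose_of_mem_same 𝒜 hm, decompose_of_mem_same ℬ (hΦ j m hm)]
    · rw [decompose_of_mem_ne 𝒜 hm hj, decompose_of_mem_ne ℬ (hΦ j m hm) hj, map_zero]
  | add x y hx hy => simp only [map_add, decompose_add, add_apply, AddMemClass.coe_add, hx, hy]

namespace GradedAlgebra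

variable {R S : Type*} [CommRing R] [CommRing S] [Algebra R S] (𝒜 : ℕ → Submodule R S)
  [GradedAlgebra 𝒜] (h0 : 𝒜 0 = Subalgebra.toSubmodule ⊥)
  (hinj : Function.Injective (algebraMap R S))

noncomputable def projZeroBase : S →+* R :=
  (Algebra.botEquivOfInjective hinj : (⊥ : Subalgebra R S) →+* R).comp
    ((GradedRing.projZeroRingHom 𝒜).codRestrict (⊥ : Subalgebra R S) fun x => by
      rw [← Subalgebra.mem_toSubmodule, ← h0]
      exact SetLike.coe_mem _)

theorem algebraMap_projZeroBase (x : S) :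
    algebraMap R S (projZeroBase 𝒜 h0 hinj x) = DirectSum.decompose 𝒜 x 0 :=
  congrArg Subtype.val ((Algebra.botEquivOfInjective hinj).symm_apply_apply _)

theorem projZeroBase_algebraMap (r : R) : projZeroBase 𝒜 h0 hinj (algebraMap R S r) = r := by
  have hr : algebraMap R S r ∈ 𝒜 0 := by
    rw [h0, Subalgebra.mem_toSubmodule]
    exact Subalgebra.algebraMap_mem _ r
  apply hinj
  rw [algebraMap_projZeroBase, DirectSum.decompose_of_mem_same 𝒜 hr]

theorem projZeroBase_map {R' S' : Type*} [CommRing R'] [CommRing S'] [Algebra R' S']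
    (𝒜' : ℕ → Submodule R' S') [GradedAlgebra 𝒜'] (h0' : 𝒜' 0 = Subalgebra.toSubmodule ⊥)
    (hinj' : Function.Injective (algebraMap R' S')) (f : R →+* R') (Φ : S →+* S')
    (hΦ : ∀ i, ∀ x ∈ 𝒜 i, Φ x ∈ 𝒜' i)
    (hΦf : ∀ r, Φ (algebraMap R S r) = algebraMap R' S' (f r)) (x : S) :
    projZeroBase 𝒜' h0' hinj' (Φ x) = f (projZeroBase 𝒜 h0 hinj x) := by
  apply hinj'
  rw [algebraMap_projZeroBase, ← hΦf, algebraMap_projZeroBase]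
  exact DirectSum.decompose_map_apply 𝒜 𝒜' Φ.toAddMonoidHom hΦ x 0

end GradedAlgebra

theorem RingHom.Flat.of_retract {B A B' A' : Type*} [CommRing B] [CommRing A] [CommRing B']
    [CommRing A'] {f : B →+* A} {Φ : B' →+* A'} (ιB : B →+* B') (ιA : A →+* A')
    (πB : B' →+* B) (πA : A' →+* A) (hπιB : ∀ b, πB (ιB b) = b) (hπιA : ∀ a, πA (ιA a) = a)
    (hι : ∀ b, Φ (ιB b) = ιA (f b)) (hπ : ∀ x, πA (Φ x) = f (πB x)) (hΦ : Φ.Flat) : f.Flat := by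
  algebraize [f, Φ, πB, f.comp πB]
  have : IsScalarTower B' B A := .of_algebraMap_eq fun _ => rfl
  let πA' : A' →ₗ[B'] A :=
    { πA.toAddMonoidHom with
      map_smul' := fun x y => show πA (Φ x * y) = f (πB x) * πA y by rw [map_mul, hπ] }
  let e : A →ₗ[B] B ⊗[B'] A' :=
    { toFun := fun a => 1 ⊗ₜ ιA a
      map_add' := fun a a' => by rw [map_add, tmul_add]
      map_smul' := fun b a => by
        have hb : ιB b • (1 : B) = b := show πB (ιB b) * 1 = b by rw [mul_one, hπιB]
        have hba : ιA (b • a) = ιB b • ιA a :=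
          show ιA (f b * a) = Φ (ιB b) * ιA a by rw [hι, map_mul]
        dsimp only [RingHom.id_apply]
        rw [hba, ← smul_tmul, hb, smul_tmul', smul_eq_mul, mul_one] }
  exact Module.Flat.of_retract e (πA'.liftBaseChange B) (by ext a; simp [e, πA', hπιA])

/-- Let `B → A` be a ring homomorphism of commutative rings, and let
`B̄ = ⊕ B̄ᵢ`, `Ā = ⊕ Āᵢ` be nonnegatively graded rings with degree-zero parts `B` and `A`
(encoded: `B̄`, `Ā` are graded `B`- resp. `A`-algebras whose degree-zero component is exactly
the image of the base, the base injecting into them), together with a graded ring homomorphism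
`Φ : B̄ → Ā` extending `f : B → A`.  If `Ā` is flat as a `B̄`-module, then `A` is flat as a
`B`-module. -/
theorem stmt0
    {B A Bbar Abar : Type*} [CommRing B] [CommRing A] [CommRing Bbar] [CommRing Abar]
    [Algebra B Bbar] [Algebra A Abar]
    (𝒷 : ℕ → Submodule B Bbar) (𝒶 : ℕ → Submodule A Abar)
    [GradedAlgebra 𝒷] [GradedAlgebra 𝒶]
    (h𝒷0 : 𝒷 0 = Subalgebra.toSubmodule (⊥ : Subalgebra B Bbar))
    (h𝒶0 : 𝒶 0 = Subalgebra.toSubmodule (⊥ : Subalgebra A Abar))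
    (hBinj : Function.Injective (algebraMap B Bbar))
    (hAinj : Function.Injective (algebraMap A Abar))
    (f : B →+* A) (Φ : Bbar →+* Abar)
    (hΦgr : ∀ i, ∀ x ∈ 𝒷 i, Φ x ∈ 𝒶 i)
    (hΦext : ∀ b : B, Φ (algebraMap B Bbar b) = algebraMap A Abar (f b))
    (hflat : letI := Φ.toAlgebra; Module.Flat Bbar Abar) :
    letI := f.toAlgebra; Module.Flat B A :=
  RingHom.Flat.of_retract (algebraMap B Bbar) (algebraMap A Abar)
    (GradedAlgebra.projZeroBase 𝒷 h𝒷0 hBinj) (GradedAlgebra.projZeroBase 𝒶 h𝒶0 hAinj)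
    (GradedAlgebra.projZeroBase_algebraMap 𝒷 h𝒷0 hBinj)
    (GradedAlgebra.projZeroBase_algebraMap 𝒶 h𝒶0 hAinj) hΦext
    (GradedAlgebra.projZeroBase_map 𝒷 h𝒷0 hBinj 𝒶 h𝒶0 hAinj f Φ hΦgr hΦext) hflat
end

section
/- Let B → A be a non-flat ring homomorphism of commutative rings, witnessed by an ideal I ⊆ B for which I ⊗_B A → A is not injective. Let B̄ → Ā be a graded ring homomorphism of nonnegatively graded rings with degree-zero parts B → A. Then the map IB̄ ⊗_{B̄} Ā → Ā is not injective; in particular Ā is not flat over B̄. -/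
/-!
Projection onto degree zero gives ring retractions `B̄ → B` and `Ā → A` of the structure maps,
and since `Φ` preserves degrees they are compatible with `f` and `Φ`. Tensoring, the map
`I ⊗_B A → IB̄ ⊗_{B̄} Ā` has a left inverse, and it intertwines the two multiplication maps with
the injection `A → Ā`. So an element of the kernel of `I ⊗_B A → A` that is nonzero stays nonzero
in the kernel of `IB̄ ⊗_{B̄} Ā → Ā`.
-/

open TensorProduct

namespace TensorProduct

variable {R S : Type*} [CommSemiring R] [CommSemiring S] {σ : R →+* S} {τ : S →+* R}
  {M N M' N' : Type*} [AddCommMonoid M] [AddCommMonoid N] [AddCommMonoid M'] [AddCommMonoid N']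
  [Module R M] [Module R N] [Module S M'] [Module S N']

def mapₛₗ (φ : M →ₛₗ[σ] M') (ψ : N →ₛₗ[σ] N') : M ⊗[R] N →ₛₗ[σ] M' ⊗[S] N' :=
  lift (((mk S M' N').compl₂ ψ).comp φ)

@[simp]
theorem mapₛₗ_tmul (φ : M →ₛₗ[σ] M') (ψ : N →ₛₗ[σ] N') (m : M) (n : N) :
    mapₛₗ φ ψ (m ⊗ₜ n) = φ m ⊗ₜ ψ n :=
  rfl

theorem mapₛₗ_leftInverse {φ : M →ₛₗ[σ] M'} {ψ : N →ₛₗ[σ] N'} {φ' : M' →ₛₗ[τ] M}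
    {ψ' : N' →ₛₗ[τ] N} (hφ : Function.LeftInverse φ' φ) (hψ : Function.LeftInverse ψ' ψ) :
    Function.LeftInverse (mapₛₗ φ' ψ') (mapₛₗ φ ψ) := by
  intro z
  induction z using TensorProduct.induction_on with
  | zero => simp only [map_zero]
  | tmul m n => simp only [mapₛₗ_tmul, hφ m, hψ n]
  | add x y hx hy => simp only [map_add, hx, hy]

end TensorProduct

section IdealTensor

variable {R S : Type*} [CommSemiring R] [CommSemiring S] {M N : Type*}
  [AddCommMonoid M] [AddCommMonoid N] [Module R M] [Module S N]

theorem lift_lsmul_comp_subtype_comp_mapₛₗ (σ : R →+* S) {I : Ideal R} {J : Ideal S}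
    (hIJ : ∀ x ∈ I, σ x ∈ J) (ψ : M →ₛₗ[σ] N) :
    (lift ((LinearMap.lsmul S N).comp J.subtype)).comp
        (mapₛₗ (σ.toSemilinearMap.restrict hIJ) ψ) =
      ψ.comp (lift ((LinearMap.lsmul R M).comp I.subtype)) :=
  TensorProduct.ext' fun i m => (ψ.map_smulₛₗ (i : R) m).symm

theorem not_injective_lift_lsmul_comp_subtype_map {σ : R →+* S} {τ : S →+* R}
    (hτσ : Function.LeftInverse τ σ) {ψ : M →ₛₗ[σ] N} {χ : N →ₛₗ[τ] M}
    (hχψ : Function.LeftInverse χ ψ) {I : Ideal R}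
    (hI : ¬ Function.Injective (lift ((LinearMap.lsmul R M).comp I.subtype))) :
    ¬ Function.Injective (lift ((LinearMap.lsmul S N).comp (I.map σ).subtype)) := by
  intro hinj
  have hσ : ∀ x ∈ I, σ x ∈ I.map σ := fun x hx => Ideal.mem_map_of_mem σ hx
  have hτ : ∀ y ∈ I.map σ, τ y ∈ I := fun y hy => by
    have hτσ' : τ.comp σ = RingHom.id R := RingHom.ext hτσ
    simpa [Ideal.map_map, hτσ'] using Ideal.mem_map_of_mem τ hy
  have hrestrict : Function.LeftInverse (τ.toSemilinearMap.restrict hτ)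
      (σ.toSemilinearMap.restrict hσ) := fun i => Subtype.ext (hτσ i)
  have hmap := (mapₛₗ_leftInverse hrestrict hχψ).injective
  refine hI (Function.Injective.of_comp (f := ψ) ?_)
  rw [← LinearMap.coe_comp, ← lift_lsmul_comp_subtype_comp_mapₛₗ σ hσ ψ, LinearMap.coe_comp]
  exact hinj.comp hmap

end IdealTensor

def RingHom.toSemilinearMapOfCommSq {R S A B : Type*} [CommSemiring R] [CommSemiring S]
    [Semiring A] [Semiring B] [Algebra R A] [Algebra S B] (α : A →+* B) (σ : R →+* S)
    (h : ∀ r, α (algebraMap R A r) = algebraMap S B (σ r)) : A →ₛₗ[σ] B where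
  toFun := α
  map_add' := map_add α
  map_smul' r a := by rw [Algebra.smul_def, map_mul, h, ← Algebra.smul_def]

theorem Module.Flat.lift_lsmul_comp_subtype_injective {R M : Type*} [CommRing R]
    [AddCommGroup M] [Module R M] [Module.Flat R M] (I : Ideal R) :
    Function.Injective (lift ((LinearMap.lsmul R M).comp I.subtype)) := by
  rw [← LinearMap.lid_comp_rTensor]
  exact (TensorProduct.lid R M).injective.comp
    (Module.Flat.rTensor_preserves_injective_linearMap _ I.injective_subtype)

namespace GradedAlgebra

open DirectSum

variable {ι R A : Type*} [DecidableEq ι] [AddCommMonoid ι] [PartialOrder ι]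
  [CanonicallyOrderedAdd ι] [CommSemiring R] [Semiring A] [Algebra R A]
  (𝒜 : ι → Submodule R A) [GradedAlgebra 𝒜]

noncomputable def projZeroToBase (h0 : 𝒜 0 ≤ Subalgebra.toSubmodule ⊥)
    (hinj : Function.Injective (algebraMap R A)) : A →+* R :=
  (Algebra.botEquivOfInjective hinj : (⊥ : Subalgebra R A) →+* R).comp
    ((GradedRing.projZeroRingHom 𝒜).codRestrict (⊥ : Subalgebra R A)
      fun x => h0 (decompose 𝒜 x 0).2)

variable {𝒜}

theorem algebraMap_projZeroToBase (h0 : 𝒜 0 ≤ Subalgebra.toSubmodule ⊥)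
    (hinj : Function.Injective (algebraMap R A)) (x : A) :
    algebraMap R A (projZeroToBase 𝒜 h0 hinj x) = decompose 𝒜 x 0 :=
  congrArg Subtype.val ((Algebra.botEquivOfInjective hinj).symm_apply_apply _)

theorem projZeroToBase_algebraMap (h0 : 𝒜 0 ≤ Subalgebra.toSubmodule ⊥)
    (hinj : Function.Injective (algebraMap R A)) (r : R) :
    projZeroToBase 𝒜 h0 hinj (algebraMap R A r) = r :=
  hinj <| by
    rw [algebraMap_projZeroToBase, decompose_of_mem_same 𝒜 (SetLike.algebraMap_mem_graded 𝒜 r)]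

theorem projZeroToBase_map {R' A' : Type*} [CommSemiring R'] [Semiring A'] [Algebra R' A']
    {𝒜' : ι → Submodule R' A'} [GradedAlgebra 𝒜']
    (h0 : 𝒜 0 ≤ Subalgebra.toSubmodule ⊥) (hinj : Function.Injective (algebraMap R A))
    (h0' : 𝒜' 0 ≤ Subalgebra.toSubmodule ⊥) (hinj' : Function.Injective (algebraMap R' A'))
    (Φ : 𝒜 →+*ᵍ 𝒜') (f : R →+* R') (hΦ : ∀ r, Φ (algebraMap R A r) = algebraMap R' A' (f r))
    (x : A) : projZeroToBase 𝒜' h0' hinj' (Φ x) = f (projZeroToBase 𝒜 h0 hinj x) :=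
  hinj' <| by
    rw [algebraMap_projZeroToBase, ← hΦ, algebraMap_projZeroToBase,
      GradedRingHom.map_directSumDecompose]

end GradedAlgebra

/-- Let `B → A` be a non-flat ring homomorphism of commutative rings, witnessed by
an ideal `I ⊆ B` for which the canonical map `I ⊗_B A → A` is not injective.  Let `B̄ → Ā` be a
graded ring homomorphism of nonnegatively graded rings with degree-zero parts `B → A`.  Then the
canonical map `IB̄ ⊗_{B̄} Ā → Ā` is not injective; in particular `Ā` is not flat over `B̄`. -/
theorem stmt2
    {B A Bbar Abar : Type*} [CommRing B] [CommRing A] [CommRing Bbar] [CommRing Abar]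
    [Algebra B Bbar] [Algebra A Abar]
    (𝒷 : ℕ → Submodule B Bbar) (𝒶 : ℕ → Submodule A Abar)
    [GradedAlgebra 𝒷] [GradedAlgebra 𝒶]
    (h𝒷0 : 𝒷 0 = Subalgebra.toSubmodule (⊥ : Subalgebra B Bbar))
    (h𝒶0 : 𝒶 0 = Subalgebra.toSubmodule (⊥ : Subalgebra A Abar))
    (hBinj : Function.Injective (algebraMap B Bbar))
    (hAinj : Function.Injective (algebraMap A Abar))
    (f : B →+* A) (Φ : Bbar →+* Abar)
    (hΦgr : ∀ i, ∀ x ∈ 𝒷 i, Φ x ∈ 𝒶 i)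
    (hΦext : ∀ b : B, Φ (algebraMap B Bbar b) = algebraMap A Abar (f b))
    (I : Ideal B)
    (hI : letI := f.toAlgebra;
      ¬ Function.Injective
        (TensorProduct.lift (((LinearMap.lsmul B A).comp I.subtype)) :
          I ⊗[B] A →ₗ[B] A)) :
    letI := Φ.toAlgebra;
    ¬ Function.Injective
        (TensorProduct.lift (((LinearMap.lsmul Bbar Abar).comp
            (I.map (algebraMap B Bbar)).subtype)) :
          (I.map (algebraMap B Bbar)) ⊗[Bbar] Abar →ₗ[Bbar] Abar) ∧
    letI := Φ.toAlgebra; ¬ Module.Flat Bbar Abar := by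
  let := f.toAlgebra
  let := Φ.toAlgebra
  set qB := GradedAlgebra.projZeroToBase 𝒷 h𝒷0.le hBinj
  set qA := GradedAlgebra.projZeroToBase 𝒶 h𝒶0.le hAinj
  have hq : ∀ x, qA (Φ x) = f (qB x) :=
    GradedAlgebra.projZeroToBase_map h𝒷0.le hBinj h𝒶0.le hAinj ⟨Φ, hΦgr _ _⟩ f hΦext
  have hnotinj :=
    not_injective_lift_lsmul_comp_subtype_map
      (ψ := (algebraMap A Abar).toSemilinearMapOfCommSq (algebraMap B Bbar)
        fun b => (hΦext b).symm)
      (χ := qA.toSemilinearMapOfCommSq qB hq)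
      (GradedAlgebra.projZeroToBase_algebraMap h𝒷0.le hBinj)
      (GradedAlgebra.projZeroToBase_algebraMap h𝒶0.le hAinj) hI
  exact ⟨hnotinj, fun _ => hnotinj (Module.Flat.lift_lsmul_comp_subtype_injective _)⟩
end
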